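/- Every maximum-length plateau-k-rollercoaster subsequence of a word w corresponds to a path in NEG(w): if u = w[i_1]w[i_2]...w[i_m] is a plateau-k-rollercoaster subsequence of w of maximum length m, embedded at the canonical (greedy leftmost) positions, then for each consecutive pair, (v_{i_t}, v_{i_{t+1}}) is an edge of NEG(w). -/

import Mathlib

namespace RollerCoaster

abbrev Word := List ℕ

def weakIncr (u : Word) : Prop := u.Chain' (· ≤ ·)

def weakDecr (u : Word) : Prop := u.Chain' (· ≥ ·)

def plateauRun (u : Word) : Prop := weakIncr u ∨ weakDecr u

/-- The factor `w[i..j]` (0-indexed, inclusive). -/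
def factorAt (w : Word) (i j : ℕ) : Word := (w.drop i).take (j + 1 - i)

/-- `w[i..j]` is a maximal plateau-run: weakly monotone and not extendable
to a weakly monotone factor in either direction. -/
def maxRunAt (w : Word) (i j : ℕ) : Prop :=
  i ≤ j ∧ j < w.length ∧ plateauRun (factorAt w i j) ∧
  (i = 0 ∨ ¬ plateauRun (factorAt w (i - 1) j)) ∧
  (j + 1 = w.length ∨ ¬ plateauRun (factorAt w i (j + 1)))

/-- Number of distinct letters of a word. -/
def distinctCount (u : Word) : ℕ := u.dedup.length

/-- `w` is a plateau-`k`-rollercoaster: every maximal plateau-run contains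
at least `k` distinct letters. -/
def IsPlateauRC (k : ℕ) (w : Word) : Prop :=
  ∀ i j, maxRunAt w i j → k ≤ distinctCount (factorAt w i j)

def subseqAt (w : Word) (idx : List ℕ) : Word := idx.map (fun t => w.getD t 0)

def embeds (w : Word) (idx : List ℕ) : Prop :=
  idx.Pairwise (· < ·) ∧ ∀ t ∈ idx, t < w.length

/-- `w` is a plateau-`(k,h)_ξ`-rollercoaster (`ξ = ↑` iff `up = true`):
the last (possibly incomplete) run has orientation `ξ` and exactly `h`
distinct letters if `h < k` (at least `k` if `h = k`), and every other
maximal run is a plateau-`k`-run. -/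
def IsPRCkh (k h : ℕ) (up : Bool) (w : Word) : Prop :=
  w ≠ [] ∧
  ∃ i, i < w.length ∧
    (if up then
        weakIncr (factorAt w i (w.length - 1)) ∧
          (i = 0 ∨ ¬ weakIncr (factorAt w (i - 1) (w.length - 1)))
      else
        weakDecr (factorAt w i (w.length - 1)) ∧
          (i = 0 ∨ ¬ weakDecr (factorAt w (i - 1) (w.length - 1)))) ∧
    (if h < k then distinctCount (factorAt w i (w.length - 1)) = h
      else k ≤ distinctCount (factorAt w i (w.length - 1))) ∧
    ∀ i' j', maxRunAt w i' j' →
      (i' = i ∧ j' = w.length - 1) ∨ k ≤ distinctCount (factorAt w i' j')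

def upEdge (w : Word) (i j : ℕ) : Prop :=
  i < j ∧ j < w.length ∧ w.getD i 0 < w.getD j 0 ∧
  ∀ j', i < j' → j' < j → ¬ (w.getD i 0 ≤ w.getD j' 0 ∧ w.getD j' 0 ≤ w.getD j 0)

def eqEdge (w : Word) (i j : ℕ) : Prop :=
  i < j ∧ j < w.length ∧ w.getD i 0 = w.getD j 0 ∧
  ∀ j', i < j' → j' < j → w.getD j' 0 ≠ w.getD j 0

def downEdge (w : Word) (i j : ℕ) : Prop :=
  i < j ∧ j < w.length ∧ w.getD j 0 < w.getD i 0 ∧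
  ∀ j', i < j' → j' < j → ¬ (w.getD j 0 ≤ w.getD j' 0 ∧ w.getD j' 0 ≤ w.getD i 0)

def negEdge (w : Word) (i j : ℕ) : Prop :=
  upEdge w i j ∨ eqEdge w i j ∨ downEdge w i j

/-!
If `(v_{i_t}, v_{i_{t+1}})` is not an edge, then by the greedy choice of `i_{t+1}` some position
strictly between carries a letter `c` with `u[t] ≤ c < u[t+1]` or `u[t+1] < c ≤ u[t]`. Inserting
such a letter between two consecutive letters of a plateau-`k`-rollercoaster keeps it one, because
every maximal run of the longer word contains the letters of a maximal run of the shorter one;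
this produces a longer plateau-`k`-rollercoaster subsequence of `w`. The case `u[t+1] < c ≤ u[t]`
reduces to the other one through the order-reversing letter map `a ↦ N - a`.
-/

def ChainOn (R : ℕ → ℕ → Prop) (w : Word) (i j : ℕ) : Prop :=
  ∀ p, i ≤ p → p < j → R (w.getD p 0) (w.getD (p + 1) 0)

def PlateauOn (w : Word) (i j : ℕ) : Prop :=
  ChainOn (· ≤ ·) w i j ∨ ChainOn (· ≥ ·) w i j

section Factors

variable {R : ℕ → ℕ → Prop} {w : Word} {i j i' j' : ℕ}

theorem ChainOn.mono (h : ChainOn R w i j) (hi : i ≤ i') (hj : j' ≤ j) : ChainOn R w i' j' :=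
  fun p hp hp' => h p (hi.trans hp) (hp'.trans_le hj)

theorem PlateauOn.mono (h : PlateauOn w i j) (hi : i ≤ i') (hj : j' ≤ j) : PlateauOn w i' j' :=
  h.imp (·.mono hi hj) (·.mono hi hj)

theorem plateauOn_self_succ (w : Word) (i : ℕ) : PlateauOn w i (i + 1) := by
  refine (le_total (w.getD i 0) (w.getD (i + 1) 0)).imp (fun h p hp hp' => ?_)
    (fun h p hp hp' => ?_) <;> obtain rfl : p = i := by omega
  exacts [h, h]

theorem length_factorAt (hj : j < w.length) : (factorAt w i j).length = j + 1 - i := by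
  simp only [factorAt, List.length_take, List.length_drop]
  omega

theorem getD_factorAt {p : ℕ} (hp : p < j + 1 - i) :
    (factorAt w i j).getD p 0 = w.getD (i + p) 0 := by
  simp only [factorAt, List.getD_eq_getElem?_getD, List.getElem?_take, List.getElem?_drop,
    if_pos hp]

theorem isChain_factorAt_iff (hj : j < w.length) :
    (factorAt w i j).IsChain R ↔ ChainOn R w i j := by
  have hlen := length_factorAt (i := i) hj
  rw [List.isChain_iff_getElem]
  refine ⟨fun h p hp hp' => ?_, fun h p hp => ?_⟩
  · have := h (p - i) (by omega)
    rwa [← List.getD_eq_getElem _ 0, ← List.getD_eq_getElem _ 0, getD_factorAt (by omega),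
      getD_factorAt (by omega), show i + (p - i) = p by omega,
      show i + (p - i + 1) = p + 1 by omega] at this
  · rw [← List.getD_eq_getElem _ 0, ← List.getD_eq_getElem _ 0, getD_factorAt (by omega),
      getD_factorAt (by omega)]
    exact h (i + p) (by omega) (by omega)

theorem plateauRun_factorAt_iff (hj : j < w.length) :
    plateauRun (factorAt w i j) ↔ PlateauOn w i j := by
  rw [plateauRun, weakIncr, weakDecr, List.Chain', List.Chain', isChain_factorAt_iff hj,
    isChain_factorAt_iff hj, PlateauOn]

theorem maxRunAt_iff : maxRunAt w i j ↔ i ≤ j ∧ j < w.length ∧ PlateauOn w i j ∧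
    (i = 0 ∨ ¬ PlateauOn w (i - 1) j) ∧ (j + 1 = w.length ∨ ¬ PlateauOn w i (j + 1)) := by
  refine ⟨fun ⟨hij, hj, hrun, hl, hr⟩ => ?_, fun ⟨hij, hj, hrun, hl, hr⟩ => ?_⟩ <;>
    refine ⟨hij, hj, ?_, ?_, ?_⟩
  · exact (plateauRun_factorAt_iff hj).1 hrun
  · exact hl.imp_right (mt (plateauRun_factorAt_iff hj).2)
  · refine hr.elim .inl fun h => or_iff_not_imp_left.2 fun hlen => ?_
    exact mt (plateauRun_factorAt_iff (by omega)).2 h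
  · exact (plateauRun_factorAt_iff hj).2 hrun
  · exact hl.imp_right (mt (plateauRun_factorAt_iff hj).1)
  · refine hr.elim .inl fun h => or_iff_not_imp_left.2 fun hlen => ?_
    exact mt (plateauRun_factorAt_iff (by omega)).1 h

theorem mem_factorAt (hj : j < w.length) {a : ℕ} :
    a ∈ factorAt w i j ↔ ∃ p, i ≤ p ∧ p ≤ j ∧ w.getD p 0 = a := by
  have hlen := length_factorAt (i := i) hj
  rw [List.mem_iff_getElem]
  constructor
  · rintro ⟨p, hp, rfl⟩
    refine ⟨i + p, by omega, by omega, ?_⟩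
    rw [← getD_factorAt (j := j) (by omega), List.getD_eq_getElem]
  · rintro ⟨p, hp, hp', rfl⟩
    refine ⟨p - i, by omega, ?_⟩
    rw [← List.getD_eq_getElem _ 0, getD_factorAt (by omega), show i + (p - i) = p by omega]

end Factors

section LetterMaps

variable {f : ℕ → ℕ} {u : Word}

theorem plateauRun_map_iff {l : Word} (hf : StrictAntiOn f {a | a ∈ l}) :
    plateauRun (l.map f) ↔ plateauRun l := by
  have key : ∀ R S : ℕ → ℕ → Prop, (∀ a ∈ l, ∀ b ∈ l, R (f a) (f b) ↔ S a b) →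
      ((l.map f).IsChain R ↔ l.IsChain S) := fun R S h => by
    rw [List.isChain_map]
    exact List.IsChain.iff_of_mem_imp fun a b ha hb => h a ha b hb
  rw [plateauRun, plateauRun, weakIncr, weakDecr, weakIncr, weakDecr, List.Chain', List.Chain',
    List.Chain', List.Chain', key _ (· ≥ ·) fun a ha b hb => hf.le_iff_ge ha hb,
    key _ (· ≤ ·) fun a ha b hb => hf.le_iff_ge hb ha, or_comm]

theorem distinctCount_map_of_injOn {l : Word} (hf : Set.InjOn f {a | a ∈ l}) :
    distinctCount (l.map f) = distinctCount l := by
  have himage : (l.map f).toFinset = l.toFinset.image f := Multiset.toFinset_map f l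
  rw [distinctCount, distinctCount, ← List.card_toFinset, ← List.card_toFinset, himage,
    Finset.card_image_of_injOn (by simpa using hf)]

theorem distinctCount_le_of_subset {l l' : Word} (h : l ⊆ l') :
    distinctCount l ≤ distinctCount l' := by
  rw [distinctCount, distinctCount, ← List.card_toFinset, ← List.card_toFinset]
  exact Finset.card_le_card fun a ha => List.mem_toFinset.2 (h (List.mem_toFinset.1 ha))

theorem factorAt_map (i j : ℕ) : factorAt (u.map f) i j = (factorAt u i j).map f := by
  simp only [factorAt, List.map_take, List.map_drop]

theorem factorAt_subset (i j : ℕ) : factorAt u i j ⊆ u :=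
  List.Subset.trans (List.take_subset _ _) (List.drop_subset _ _)

theorem isPlateauRC_map_iff {k : ℕ} (hf : StrictAntiOn f {a | a ∈ u}) :
    IsPlateauRC k (u.map f) ↔ IsPlateauRC k u := by
  have hfac : ∀ i j, StrictAntiOn f {a | a ∈ factorAt u i j} :=
    fun i j => hf.mono fun a ha => factorAt_subset i j ha
  have hmax : ∀ i j, maxRunAt (u.map f) i j ↔ maxRunAt u i j := by
    intro i j
    simp only [maxRunAt, List.length_map, factorAt_map, plateauRun_map_iff (hfac _ _)]
  simp only [IsPlateauRC, hmax, factorAt_map, distinctCount_map_of_injOn (hfac _ _).injOn]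

end LetterMaps

section InsertIdx

variable {α : Type*} {l : List α} {n p : ℕ} {a d : α}

theorem getD_insertIdx_of_lt (h : p < n) : (l.insertIdx n a).getD p d = l.getD p d := by
  rw [List.getD_eq_getElem?_getD, List.getElem?_insertIdx_of_lt h, List.getD_eq_getElem?_getD]

theorem getD_insertIdx_self (h : n ≤ l.length) : (l.insertIdx n a).getD n d = a := by
  rw [List.getD_eq_getElem?_getD, List.getElem?_insertIdx_self, if_pos h, Option.getD_some]

theorem getD_insertIdx_succ (h : n ≤ p) : (l.insertIdx n a).getD (p + 1) d = l.getD p d := by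
  rw [List.getD_eq_getElem?_getD, List.getElem?_insertIdx_of_gt (by omega),
    List.getD_eq_getElem?_getD, Nat.add_sub_cancel]

end InsertIdx

section Insertion

variable {R : ℕ → ℕ → Prop} {u : Word} {s x i j : ℕ}

theorem chainOn_insertIdx_of_le (hj : j ≤ s) :
    ChainOn R (u.insertIdx (s + 1) x) i j ↔ ChainOn R u i j := by
  refine forall₃_congr fun p hp hpj => ?_
  rw [getD_insertIdx_of_lt (by omega), getD_insertIdx_of_lt (by omega)]

theorem chainOn_insertIdx_succ (hi : s + 1 ≤ i) :
    ChainOn R (u.insertIdx (s + 1) x) (i + 1) (j + 1) ↔ ChainOn R u i j := by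
  refine ⟨fun h p hp hpj => ?_, fun h p hp hpj => ?_⟩
  · have := h (p + 1) (by omega) (by omega)
    rwa [getD_insertIdx_succ (by omega), getD_insertIdx_succ (by omega)] at this
  · obtain ⟨q, rfl⟩ : ∃ q, p = q + 1 := ⟨p - 1, by omega⟩
    rw [getD_insertIdx_succ (by omega), getD_insertIdx_succ (by omega)]
    exact h q (by omega) (by omega)

theorem plateauOn_insertIdx_of_le (hj : j ≤ s) :
    PlateauOn (u.insertIdx (s + 1) x) i j ↔ PlateauOn u i j := by
  rw [PlateauOn, PlateauOn, chainOn_insertIdx_of_le hj, chainOn_insertIdx_of_le hj]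

theorem plateauOn_insertIdx_succ (hi : s + 1 ≤ i) :
    PlateauOn (u.insertIdx (s + 1) x) (i + 1) (j + 1) ↔ PlateauOn u i j := by
  rw [PlateauOn, PlateauOn, chainOn_insertIdx_succ hi, chainOn_insertIdx_succ hi]

theorem lt_length_of_lt_getD {n : ℕ} (h : x < u.getD n 0) : n < u.length := by
  by_contra hn
  rw [List.getD_eq_default _ _ (by omega)] at h
  omega

theorem chainOn_le_insertIdx_across (hle : u.getD s 0 ≤ x) (hlt : x < u.getD (s + 1) 0)
    (hi : i ≤ s) (hj : s < j) :
    ChainOn (· ≤ ·) (u.insertIdx (s + 1) x) i (j + 1) ↔ ChainOn (· ≤ ·) u i j := by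
  have hs := lt_length_of_lt_getD hlt
  have hx : (u.insertIdx (s + 1) x).getD (s + 1) 0 = x := getD_insertIdx_self hs.le
  refine ⟨fun h p hp hpj => ?_, fun h p hp hpj => ?_⟩
  · rcases lt_trichotomy p s with hps | rfl | hps
    · have := h p hp (by omega)
      rwa [getD_insertIdx_of_lt (by omega), getD_insertIdx_of_lt (by omega)] at this
    · exact hle.trans hlt.le
    · have := h (p + 1) (by omega) (by omega)
      rwa [getD_insertIdx_succ (by omega), getD_insertIdx_succ (by omega)] at this
  · dsimp only
    rcases lt_trichotomy p s with hps | rfl | hps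
    · rw [getD_insertIdx_of_lt (by omega), getD_insertIdx_of_lt (by omega)]
      exact h p hp (by omega)
    · rwa [getD_insertIdx_of_lt (by omega), hx]
    obtain rfl | hps := (Nat.succ_le_of_lt hps).eq_or_lt
    · rw [hx, getD_insertIdx_succ le_rfl]
      exact hlt.le
    obtain ⟨q, rfl⟩ : ∃ q, p = q + 1 := ⟨p - 1, by omega⟩
    rw [getD_insertIdx_succ (by omega), getD_insertIdx_succ (by omega)]
    exact h q (by omega) (by omega)

theorem plateauOn_insertIdx_across (hle : u.getD s 0 ≤ x) (hlt : x < u.getD (s + 1) 0)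
    (hi : i ≤ s) (hj : s < j) :
    PlateauOn (u.insertIdx (s + 1) x) i (j + 1) ↔ PlateauOn u i j := by
  have hs := lt_length_of_lt_getD hlt
  have hv : ¬ ChainOn (· ≥ ·) (u.insertIdx (s + 1) x) i (j + 1) := fun h => by
    have := h (s + 1) (by omega) (by omega)
    rw [getD_insertIdx_self hs.le, getD_insertIdx_succ le_rfl] at this
    exact this.not_gt hlt
  have hu : ¬ ChainOn (· ≥ ·) u i j := fun h => (h s hi hj).not_gt (hle.trans_lt hlt)
  rw [PlateauOn, PlateauOn, or_iff_left hv, or_iff_left hu,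
    chainOn_le_insertIdx_across hle hlt hi hj]

theorem plateauOn_insertIdx_of_start (hle : u.getD s 0 ≤ x) (hlt : x < u.getD (s + 1) 0)
    (h : PlateauOn (u.insertIdx (s + 1) x) (s + 1) j) : PlateauOn (u.insertIdx (s + 1) x) s j := by
  have hs := lt_length_of_lt_getD hlt
  have hx : (u.insertIdx (s + 1) x).getD (s + 1) 0 = x := getD_insertIdx_self hs.le
  rcases Nat.lt_or_ge j (s + 2) with hj | hj
  · exact (plateauOn_self_succ _ s).mono le_rfl (by omega)
  rcases h with h | h
  · refine .inl fun p hp hpj => ?_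
    obtain rfl | hp := hp.eq_or_lt
    · rwa [getD_insertIdx_of_lt (by omega), hx]
    · exact h p hp hpj
  · have := h (s + 1) le_rfl (by omega)
    rw [hx, getD_insertIdx_succ le_rfl] at this
    exact absurd this hlt.not_ge

-- The run cannot take in `u[s + 1] > x`, so it is weakly decreasing, which forces `u[s] ≥ x`.
theorem eq_getD_of_plateauOn_insertIdx (hle : u.getD s 0 ≤ x) (hlt : x < u.getD (s + 1) 0)
    (hi : i ≤ s) (hrun : PlateauOn (u.insertIdx (s + 1) x) i (s + 1))
    (hmax : ¬ PlateauOn (u.insertIdx (s + 1) x) i (s + 2)) : x = u.getD s 0 := by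
  have hs := lt_length_of_lt_getD hlt
  have hx : (u.insertIdx (s + 1) x).getD (s + 1) 0 = x := getD_insertIdx_self hs.le
  rcases hrun with h | h
  · refine absurd (.inl fun p hp hpj => ?_) hmax
    obtain rfl | hps := (Nat.le_of_lt_succ hpj).eq_or_lt
    · rw [hx, getD_insertIdx_succ le_rfl]
      exact hlt.le
    · exact h p hp hps
  · have := h s hi (by omega)
    rw [getD_insertIdx_of_lt (by omega), hx] at this
    exact hle.antisymm this |>.symm

theorem chainOn_insertIdx_getD (hR : ∀ a, R a a) (hs : s < u.length) (hi : i ≤ s) :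
    ChainOn R (u.insertIdx (s + 1) (u.getD s 0)) i (s + 1) ↔ ChainOn R u i s := by
  refine ⟨fun h p hp hps => ?_, fun h p hp hps => ?_⟩
  · have := h p hp (by omega)
    rwa [getD_insertIdx_of_lt (by omega), getD_insertIdx_of_lt (by omega)] at this
  · obtain rfl | hps := (Nat.le_of_lt_succ hps).eq_or_lt
    · rw [getD_insertIdx_of_lt (by omega), getD_insertIdx_self hs]
      exact hR _
    · rw [getD_insertIdx_of_lt (by omega), getD_insertIdx_of_lt (by omega)]
      exact h p hp hps

theorem plateauOn_insertIdx_getD (hs : s < u.length) (hi : i ≤ s) :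
    PlateauOn (u.insertIdx (s + 1) (u.getD s 0)) i (s + 1) ↔ PlateauOn u i s :=
  or_congr (chainOn_insertIdx_getD le_refl hs hi) (chainOn_insertIdx_getD le_refl hs hi)

end Insertion

section MaximalRuns

variable {u : Word} {s x i j : ℕ}

theorem maxRunAt_of_maxRunAt_insertIdx_of_le (hle : u.getD s 0 ≤ x)
    (hlt : x < u.getD (s + 1) 0) (h : maxRunAt (u.insertIdx (s + 1) x) i j) (hj : j ≤ s) :
    maxRunAt u i j := by
  have hs := lt_length_of_lt_getD hlt
  rw [maxRunAt_iff, List.length_insertIdx_of_le_length hs.le] at h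
  obtain ⟨hij, -, hrun, hl, hr⟩ := h
  refine maxRunAt_iff.2 ⟨hij, by omega, (plateauOn_insertIdx_of_le hj).1 hrun,
    hl.imp_right (mt (plateauOn_insertIdx_of_le (by omega)).2), .inr fun hu => ?_⟩
  refine hr.resolve_left (by omega) ?_
  obtain hj | rfl := hj.lt_or_eq
  · exact (plateauOn_insertIdx_of_le hj).2 hu
  · exact ((plateauOn_insertIdx_across hle hlt hij (by omega)).2 hu).mono le_rfl (by omega)

theorem maxRunAt_of_maxRunAt_insertIdx_succ (hle : u.getD s 0 ≤ x)
    (hlt : x < u.getD (s + 1) 0) (h : maxRunAt (u.insertIdx (s + 1) x) (i + 1) (j + 1))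
    (hi : s + 1 ≤ i) : maxRunAt u i j := by
  have hs := lt_length_of_lt_getD hlt
  rw [maxRunAt_iff, List.length_insertIdx_of_le_length hs.le] at h
  obtain ⟨hij, hj, hrun, hl, hr⟩ := h
  refine maxRunAt_iff.2 ⟨by omega, by omega, (plateauOn_insertIdx_succ hi).1 hrun,
    .inr fun hu => ?_, hr.imp (by omega) (mt (plateauOn_insertIdx_succ hi).2)⟩
  refine hl.resolve_left (by omega) ?_
  obtain rfl | hi := hi.eq_or_lt
  · exact ((plateauOn_insertIdx_across hle hlt le_rfl (by omega)).2 hu).mono (by omega) le_rfl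
  · simpa [show i - 1 + 1 = i by omega] using
      (plateauOn_insertIdx_succ (x := x) (j := j) (by omega : s + 1 ≤ i - 1)).2 hu

theorem not_maxRunAt_insertIdx_self (hle : u.getD s 0 ≤ x) (hlt : x < u.getD (s + 1) 0) :
    ¬ maxRunAt (u.insertIdx (s + 1) x) (s + 1) j := fun h => by
  obtain ⟨-, -, hrun, hl, -⟩ := maxRunAt_iff.1 h
  exact hl.resolve_left (by omega) (plateauOn_insertIdx_of_start hle hlt hrun)

theorem maxRunAt_of_maxRunAt_insertIdx_end (hle : u.getD s 0 ≤ x)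
    (hlt : x < u.getD (s + 1) 0) (h : maxRunAt (u.insertIdx (s + 1) x) i (s + 1)) (hi : i ≤ s) :
    maxRunAt u i s := by
  have hs := lt_length_of_lt_getD hlt
  rw [maxRunAt_iff, List.length_insertIdx_of_le_length hs.le] at h
  obtain ⟨-, -, hrun, hl, hr⟩ := h
  have hr := hr.resolve_left (by omega)
  obtain rfl := eq_getD_of_plateauOn_insertIdx hle hlt hi hrun hr
  refine maxRunAt_iff.2 ⟨hi, by omega, (plateauOn_insertIdx_getD (by omega) hi).1 hrun,
    hl.imp_right (mt (plateauOn_insertIdx_getD (by omega) (by omega)).2),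
    .inr (mt (plateauOn_insertIdx_across hle hlt hi (by omega)).2 hr)⟩

theorem maxRunAt_of_maxRunAt_insertIdx_across (hle : u.getD s 0 ≤ x)
    (hlt : x < u.getD (s + 1) 0) (h : maxRunAt (u.insertIdx (s + 1) x) i (j + 1)) (hi : i ≤ s)
    (hj : s < j) : maxRunAt u i j := by
  have hs := lt_length_of_lt_getD hlt
  rw [maxRunAt_iff, List.length_insertIdx_of_le_length hs.le] at h
  obtain ⟨-, hjl, hrun, hl, hr⟩ := h
  refine maxRunAt_iff.2 ⟨by omega, by omega, (plateauOn_insertIdx_across hle hlt hi hj).1 hrun,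
    hl.imp_right (mt (plateauOn_insertIdx_across hle hlt (by omega) hj).2),
    hr.imp (by omega) (mt (plateauOn_insertIdx_across hle hlt hi (by omega)).2)⟩

-- `if p ≤ s then p else p + 1` is the position of `u[p]` after the insertion.
theorem factorAt_subset_factorAt_insertIdx {a b : ℕ} (hb : b < u.length)
    (hj : j < (u.insertIdx (s + 1) x).length)
    (hab : ∀ p, a ≤ p → p ≤ b →
      i ≤ (if p ≤ s then p else p + 1) ∧ (if p ≤ s then p else p + 1) ≤ j) :
    factorAt u a b ⊆ factorAt (u.insertIdx (s + 1) x) i j := by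
  intro c hc
  obtain ⟨p, hp, hpb, rfl⟩ := (mem_factorAt hb).1 hc
  refine (mem_factorAt hj).2 ⟨_, (hab p hp hpb).1, (hab p hp hpb).2, ?_⟩
  split_ifs with hps
  · exact getD_insertIdx_of_lt (by omega)
  · exact getD_insertIdx_succ (by omega)

theorem exists_maxRunAt_of_maxRunAt_insertIdx (hle : u.getD s 0 ≤ x)
    (hlt : x < u.getD (s + 1) 0) (h : maxRunAt (u.insertIdx (s + 1) x) i j) :
    ∃ i' j', maxRunAt u i' j' ∧ factorAt u i' j' ⊆ factorAt (u.insertIdx (s + 1) x) i j := by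
  have hj : j < (u.insertIdx (s + 1) x).length := (maxRunAt_iff.1 h).2.1
  have hij : i ≤ j := (maxRunAt_iff.1 h).1
  have hs := lt_length_of_lt_getD hlt
  have hlen := List.length_insertIdx_of_le_length hs.le x
  obtain hjs | hsj := le_or_gt j s
  · exact ⟨i, j, maxRunAt_of_maxRunAt_insertIdx_of_le hle hlt h hjs,
      factorAt_subset_factorAt_insertIdx (by omega) hj fun p _ _ => by split_ifs <;> omega⟩
  obtain his | rfl | hsi : i ≤ s ∨ i = s + 1 ∨ s + 1 < i := by omega
  · obtain rfl | hsj := (Nat.succ_le_of_lt hsj).eq_or_lt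
    · exact ⟨i, s, maxRunAt_of_maxRunAt_insertIdx_end hle hlt h his,
        factorAt_subset_factorAt_insertIdx (by omega) hj fun p _ _ => by split_ifs; omega⟩
    obtain ⟨j, rfl⟩ : ∃ j', j = j' + 1 := ⟨j - 1, by omega⟩
    exact ⟨i, j, maxRunAt_of_maxRunAt_insertIdx_across hle hlt h his (by omega),
      factorAt_subset_factorAt_insertIdx (by omega) hj fun p _ _ => by split_ifs <;> omega⟩
  · exact absurd h (not_maxRunAt_insertIdx_self hle hlt)
  · obtain ⟨i, rfl⟩ : ∃ i', i = i' + 1 := ⟨i - 1, by omega⟩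
    obtain ⟨j, rfl⟩ : ∃ j', j = j' + 1 := ⟨j - 1, by omega⟩
    exact ⟨i, j, maxRunAt_of_maxRunAt_insertIdx_succ hle hlt h (by omega),
      factorAt_subset_factorAt_insertIdx (by omega) hj fun p _ _ => by split_ifs <;> omega⟩

end MaximalRuns

theorem IsPlateauRC.insertIdx_of_le_of_lt {k : ℕ} {u : Word} {s x : ℕ} (hrc : IsPlateauRC k u)
    (hle : u.getD s 0 ≤ x) (hlt : x < u.getD (s + 1) 0) :
    IsPlateauRC k (u.insertIdx (s + 1) x) := fun i j h => by
  obtain ⟨i', j', h', hsub⟩ := exists_maxRunAt_of_maxRunAt_insertIdx hle hlt h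
  exact (hrc i' j' h').trans (distinctCount_le_of_subset hsub)

theorem IsPlateauRC.insertIdx_of_lt_of_le {k : ℕ} {u : Word} {s x : ℕ} (hrc : IsPlateauRC k u)
    (hs : s + 1 < u.length) (hlt : u.getD (s + 1) 0 < x) (hle : x ≤ u.getD s 0) :
    IsPlateauRC k (u.insertIdx (s + 1) x) := by
  set N := x + u.sum
  have hu : ∀ a ∈ u, a ≤ N := fun a ha => (List.le_sum_of_mem ha).trans (Nat.le_add_left _ _)
  have hbound : ∀ a ∈ u.insertIdx (s + 1) x, a ≤ N := fun a ha => by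
    rcases (List.mem_insertIdx hs.le).1 ha with rfl | ha
    exacts [Nat.le_add_right _ _, hu a ha]
  have hanti : StrictAntiOn (N - ·) (Set.Iic N) := fun a ha b hb hab => by
    simp only [Set.mem_Iic] at ha hb ⊢
    omega
  have hgetD : ∀ p < u.length, (u.map (N - ·)).getD p 0 = N - u.getD p 0 := fun p hp => by
    simp [List.getD_eq_getElem?_getD, hp]
  have hdual : IsPlateauRC k ((u.map (N - ·)).insertIdx (s + 1) (N - x)) := by
    refine ((isPlateauRC_map_iff (hanti.mono hu)).2 hrc).insertIdx_of_le_of_lt ?_ ?_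
    · rw [hgetD s (by omega)]
      omega
    · have hxN : x ≤ N := Nat.le_add_right _ _
      rw [hgetD (s + 1) hs]
      omega
  rwa [← List.map_insertIdx, isPlateauRC_map_iff (hanti.mono hbound)] at hdual

section Subsequences

variable {w : Word} {I : List ℕ}

theorem length_subseqAt : (subseqAt w I).length = I.length := List.length_map _

theorem getD_subseqAt {p : ℕ} (hp : p < I.length) :
    (subseqAt w I).getD p 0 = w.getD I[p] 0 := by
  simp [subseqAt, List.getD_eq_getElem?_getD, hp]

theorem subseqAt_insertIdx (n c : ℕ) :
    subseqAt w (I.insertIdx n c) = (subseqAt w I).insertIdx n (w.getD c 0) :=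
  List.map_insertIdx ..

theorem embeds.subseqAt_sublist (h : embeds w I) : (subseqAt w I).Sublist w := by
  have := List.map_getElem_sublist (l := w) (is := I.pmap Fin.mk h.2)
    ((List.pairwise_pmap _).2 (h.1.imp fun hlt _ _ => hlt))
  convert this using 1
  rw [List.map_pmap, subseqAt, ← List.pmap_eq_map h.2]
  exact List.pmap_congr_left _ fun a _ ha _ => List.getD_eq_getElem _ _ ha

theorem embeds.insertIdx (h : embeds w I) {t c : ℕ} (ht : t + 1 < I.length) (hc : I[t] < c)
    (hc' : c < I[t + 1]) : embeds w (I.insertIdx (t + 1) c) := by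
  obtain ⟨hsort, hlt⟩ := h
  refine ⟨?_, fun a ha => ?_⟩
  · rw [← List.isChain_iff_pairwise, List.isChain_iff_getElem] at hsort ⊢
    intro p hp
    grind
  · rcases (List.mem_insertIdx ht.le).1 ha with rfl | ha
    · exact hc'.trans (hlt _ (List.getElem_mem _))
    · exact hlt a ha

end Subsequences

theorem negEdge_of_forall_not_between {w : Word} {a b : ℕ} (hab : a < b) (hb : b < w.length)
    (hgreedy : ∀ c, a < c → c < b → w.getD c 0 ≠ w.getD b 0)
    (hbetween : ∀ c, a < c → c < b →
      ¬ (w.getD a 0 ≤ w.getD c 0 ∧ w.getD c 0 < w.getD b 0) ∧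
      ¬ (w.getD b 0 < w.getD c 0 ∧ w.getD c 0 ≤ w.getD a 0)) :
    negEdge w a b := by
  rcases lt_trichotomy (w.getD a 0) (w.getD b 0) with h | h | h
  · refine .inl ⟨hab, hb, h, fun c hac hcb ⟨h₁, h₂⟩ => ?_⟩
    exact (hbetween c hac hcb).1 ⟨h₁, h₂.lt_of_ne (hgreedy c hac hcb)⟩
  · exact .inr (.inl ⟨hab, hb, h, hgreedy⟩)
  · refine .inr (.inr ⟨hab, hb, h, fun c hac hcb ⟨h₁, h₂⟩ => ?_⟩)
    exact (hbetween c hac hcb).2 ⟨h₁.lt_of_ne' (hgreedy c hac hcb), h₂⟩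

theorem not_between_of_maximal {w : Word} {k : ℕ} {I : List ℕ}
    (hmax : ∀ s : Word, s.Sublist w → IsPlateauRC k s → s.length ≤ I.length)
    (hemb : embeds w I) (hrc : IsPlateauRC k (subseqAt w I)) {t c : ℕ} (ht : t + 1 < I.length)
    (hc : I[t] < c) (hc' : c < I[t + 1]) :
    ¬ (w.getD I[t] 0 ≤ w.getD c 0 ∧ w.getD c 0 < w.getD I[t + 1] 0) ∧
    ¬ (w.getD I[t + 1] 0 < w.getD c 0 ∧ w.getD c 0 ≤ w.getD I[t] 0) := by
  have hlonger : ¬ IsPlateauRC k ((subseqAt w I).insertIdx (t + 1) (w.getD c 0)) := fun h => by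
    have := hmax _ (hemb.insertIdx ht hc hc').subseqAt_sublist
      (subseqAt_insertIdx (w := w) _ _ ▸ h)
    rw [length_subseqAt, List.length_insertIdx_of_le_length ht.le] at this
    omega
  rw [← getD_subseqAt (by omega), ← getD_subseqAt ht]
  refine ⟨fun ⟨h₁, h₂⟩ => hlonger (hrc.insertIdx_of_le_of_lt h₁ h₂), fun ⟨h₁, h₂⟩ => ?_⟩
  exact hlonger (hrc.insertIdx_of_lt_of_le (by rwa [length_subseqAt]) h₁ h₂)

theorem stmt9_general (w : Word) (k m : ℕ)
    (hmax : ∀ s : Word, s.Sublist w → IsPlateauRC k s → s.length ≤ m)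
    (I : List ℕ) (hemb : embeds w I) (hlen : I.length = m)
    (hrc : IsPlateauRC k (subseqAt w I))
    (hgreedy : I.Chain' (fun a b => ∀ t, a < t → t < b → w.getD t 0 ≠ w.getD b 0)) :
    I.Chain' (negEdge w) := by
  subst hlen
  rw [List.Chain', List.isChain_iff_getElem] at hgreedy ⊢
  intro t ht
  have hlt : I[t] < I[t + 1] := List.pairwise_iff_getElem.1 hemb.1 t (t + 1) _ _ t.lt_succ_self
  exact negEdge_of_forall_not_between hlt (hemb.2 _ (List.getElem_mem _)) (hgreedy t ht)
    fun c hc hc' => not_between_of_maximal hmax hemb hrc ht hc hc'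

/-- a maximum-length plateau-k-rollercoaster subsequence, embedded
at greedy leftmost positions, corresponds to a path in NEG(w). -/
theorem stmt9 (w : Word) (k m : ℕ) (hk : 3 ≤ k)
    (hmax : ∀ s : Word, s.Sublist w → IsPlateauRC k s → s.length ≤ m)
    (I : List ℕ) (hne : I ≠ []) (hemb : embeds w I) (hlen : I.length = m)
    (hrc : IsPlateauRC k (subseqAt w I))
    (hfirst : ∀ t < I.head hne, w.getD t 0 ≠ w.getD (I.head hne) 0)
    (hgreedy : I.Chain' (fun a b => ∀ t, a < t → t < b → w.getD t 0 ≠ w.getD b 0)) :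
    I.Chain' (negEdge w) :=
  stmt9_general w k m hmax I hemb hlen hrc hgreedy

end RollerCoaster
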